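/- Let k ≥ 2 be an integer and let C_k > 0 be a constant such that μ_1({z ∈ 𝕋 : |Q(z)| < t}) ≤ C_k · t^{1/(k−1)} for every monic polynomial Q ∈ ℂ[x] with exactly k nonzero coefficients and every t > 0 (such a constant exists by Lawton's theorem). Then for every polynomial P ∈ ℂ[x] with exactly k nonzero coefficients, each of modulus ≥ 1, every integer ℓ ≥ 1 and every 0 < y ≤ 1: 0 ≤ (−1)^ℓ ∫_{S(P,y)} (log|P(x)|)^ℓ dx/x ≤ C_k · I_{ℓ,k}(y). -/

import Mathlib

/-!
Put `G(w) = (-log w)^ℓ` for `w < y` and `G(w) = 0` otherwise, so that the signed integral is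
`∫ G(|P(e^{iθ})|) dθ`. Dividing `P` by its leading coefficient, of modulus `≥ 1`, gives a monic
polynomial with the same support and smaller modulus, so Lawton's bound controls the distribution
of `|P|` on the circle: `|{θ : |P(e^{iθ})| < s}| ≤ C s^δ` with `δ = 1/(k-1)`. The superlevel sets
of `G` on `(0, ∞)` are the intervals `(0, min(y, exp(-t^{1/ℓ})))`, so by the layer-cake formula
`∫ G(|P|) dθ` is at most `C ∫ G d(z^δ)`, which is `C · I_{ℓ,k}(y)`.
-/

open MeasureTheory Polynomial Real

/-- `S(P,y) = {z ∈ 𝕋 : |P(z)| < y}`. -/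
def S1 (P : Polynomial ℂ) (y : ℝ) : Set ℂ :=
  {z : ℂ | ‖z‖ = 1 ∧ ‖P.eval z‖ < y}

/-- Arc-length measure on the unit circle, via the parametrization `θ ∈ (0,2π] ↦ e^{iθ}`. -/
noncomputable def mu1 (A : Set ℂ) : ENNReal :=
  volume {θ : ℝ | θ ∈ Set.Ioc (0:ℝ) (2*π) ∧ Complex.exp ((θ:ℂ) * Complex.I) ∈ A}

/-- `∫_A f(x) dx/x := ∫_0^{2π} 1_A(e^{iθ}) f(e^{iθ}) dθ`. -/
noncomputable def circleIntOn (A : Set ℂ) (f : ℂ → ℝ) : ℝ :=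
  ∫ θ in (0:ℝ)..(2*π), Set.indicator A f (Complex.exp ((θ:ℂ) * Complex.I))

/-- `J_{ℓ,δ}(y) := (−1)^ℓ δ ∫_0^y (log z)^ℓ z^{δ−1} dz`. -/
noncomputable def J (ℓ : ℕ) (δ y : ℝ) : ℝ :=
  (-1:ℝ)^ℓ * δ * ∫ z in (0:ℝ)..y, (Real.log z)^ℓ * z ^ (δ - 1)

/-- `I_{ℓ,k}(y) := J_{ℓ,1/(k−1)}(y)`. -/
noncomputable def Ifun (ℓ k : ℕ) (y : ℝ) : ℝ := J ℓ (1/((k:ℝ)-1)) y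

open Set

theorem lintegral_ofReal_le_of_meas_lt_le {α β : Type*} [MeasurableSpace α] [MeasurableSpace β]
    {μ : Measure α} {ν : Measure β} {f : α → ℝ} {g : β → ℝ}
    (hf : 0 ≤ᵐ[μ] f) (hfm : AEMeasurable f μ) (hg : 0 ≤ᵐ[ν] g) (hgm : AEMeasurable g ν)
    (h : ∀ t > 0, μ {a | t < f a} ≤ ν {b | t < g b}) :
    ∫⁻ a, ENNReal.ofReal (f a) ∂μ ≤ ∫⁻ b, ENNReal.ofReal (g b) ∂ν := by
  rw [lintegral_eq_lintegral_meas_lt μ hf hfm, lintegral_eq_lintegral_meas_lt ν hg hgm]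
  exact setLIntegral_mono' measurableSet_Ioi h

noncomputable def rpowMeasure (δ : ℝ) : Measure ℝ :=
  (volume.restrict (Ioi 0)).withDensity fun z => ENNReal.ofReal (δ * z ^ (δ - 1))

theorem rpowMeasure_apply (δ : ℝ) (s : Set ℝ) :
    rpowMeasure δ s = ∫⁻ z in s ∩ Ioi 0, ENNReal.ofReal (δ * z ^ (δ - 1)) := by
  rw [rpowMeasure, withDensity_apply' _ s, Measure.restrict_restrict' measurableSet_Ioi]

theorem rpowMeasure_Ioo_zero {δ : ℝ} (hδ : 0 < δ) {a : ℝ} (ha : 0 ≤ a) :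
    rpowMeasure δ (Ioo 0 a) = ENNReal.ofReal (a ^ δ) := by
  have hint : IntegrableOn (fun z : ℝ => δ * z ^ (δ - 1)) (Ioc 0 a) :=
    ((intervalIntegral.intervalIntegrable_rpow' (by linarith)).const_mul δ).1
  rw [rpowMeasure_apply, Ioo_inter_Ioi, max_self, setLIntegral_congr Ioo_ae_eq_Ioc,
    ← ofReal_integral_eq_lintegral_ofReal hint
      (ae_restrict_of_forall_mem measurableSet_Ioc fun z hz =>
        mul_nonneg hδ.le (rpow_nonneg hz.1.le _)),
    ← intervalIntegral.integral_of_le ha, intervalIntegral.integral_const_mul,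
    integral_rpow (Or.inl (by linarith)), sub_add_cancel, zero_rpow hδ.ne', sub_zero,
    mul_div_cancel₀ _ hδ.ne']

theorem ae_pos_rpowMeasure (δ : ℝ) : ∀ᵐ z ∂rpowMeasure δ, 0 < z :=
  withDensity_absolutelyContinuous _ _ (ae_restrict_mem measurableSet_Ioi)

theorem integrableOn_rpow_mul_neg_log_pow {δ : ℝ} (hδ : 0 < δ) (ℓ : ℕ) :
    IntegrableOn (fun z : ℝ => z ^ (δ - 1) * (-log z) ^ ℓ) (Ioo 0 1) := by
  set ε : ℝ := δ / (ℓ + 1)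
  have hε : 0 < ε := by positivity
  have hexp : -1 < δ - ε * ℓ - 1 := by
    have : ε * ℓ < δ := by
      rw [div_mul_eq_mul_div, div_lt_iff₀ (by positivity)]
      nlinarith
    linarith
  have hmajorant : IntegrableOn (fun z : ℝ => ε⁻¹ ^ ℓ * z ^ (δ - ε * ℓ - 1)) (Ioo 0 1) :=
    (intervalIntegral.intervalIntegrable_rpow' hexp).1.mono_set Ioo_subset_Ioc_self |>.const_mul _
  refine hmajorant.mono' (by fun_prop) (ae_restrict_of_forall_mem measurableSet_Ioo ?_)
  rintro z ⟨hz0, hz1⟩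
  have hlog : -log z ≤ ε⁻¹ * z ^ (-ε) := by
    have := log_le_rpow_div (inv_nonneg.mpr hz0.le) hε
    rwa [log_inv, inv_rpow hz0.le, ← rpow_neg hz0.le, div_eq_inv_mul] at this
  have hlog0 : 0 ≤ -log z := neg_nonneg.mpr (log_nonpos hz0.le hz1.le)
  calc ‖z ^ (δ - 1) * (-log z) ^ ℓ‖ = z ^ (δ - 1) * (-log z) ^ ℓ :=
        Real.norm_of_nonneg (by positivity)
    _ ≤ z ^ (δ - 1) * (ε⁻¹ * z ^ (-ε)) ^ ℓ := by gcongr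
    _ = ε⁻¹ ^ ℓ * z ^ (δ - ε * ℓ - 1) := by
        rw [mul_pow, ← rpow_natCast (z ^ (-ε)), ← rpow_mul hz0.le, mul_left_comm,
          ← rpow_add hz0]
        ring_nf

theorem J_eq_setIntegral {ℓ : ℕ} {δ y : ℝ} (hy : 0 ≤ y) :
    J ℓ δ y = ∫ z in Ioo 0 y, δ * z ^ (δ - 1) * (-log z) ^ ℓ := by
  rw [J, intervalIntegral.integral_of_le hy, integral_Ioc_eq_integral_Ioo, mul_assoc,
    ← integral_const_mul, ← integral_const_mul]
  congr 1 with z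
  rw [neg_pow]
  ring

theorem mul_rpow_mul_neg_log_pow_nonneg {ℓ : ℕ} {δ z : ℝ} (hδ : 0 ≤ δ) (hz : z ∈ Ioc 0 1) :
    0 ≤ δ * z ^ (δ - 1) * (-log z) ^ ℓ :=
  mul_nonneg (mul_nonneg hδ (rpow_nonneg hz.1.le _))
    (pow_nonneg (neg_nonneg.mpr (log_nonpos hz.1.le hz.2)) ℓ)

theorem J_nonneg {ℓ : ℕ} {δ y : ℝ} (hδ : 0 ≤ δ) (hy : 0 ≤ y) (hy1 : y ≤ 1) : 0 ≤ J ℓ δ y := by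
  rw [J_eq_setIntegral hy]
  exact setIntegral_nonneg measurableSet_Ioo fun z hz =>
    mul_rpow_mul_neg_log_pow_nonneg hδ ⟨hz.1, (hz.2.trans_le hy1).le⟩

noncomputable def truncNegLogPow (ℓ : ℕ) (y : ℝ) : ℝ → ℝ :=
  (Iio y).indicator fun w => (-log w) ^ ℓ

section TruncNegLogPow

variable {ℓ : ℕ} {y δ : ℝ}

@[fun_prop]
theorem measurable_truncNegLogPow : Measurable (truncNegLogPow ℓ y) :=
  (measurable_log.neg.pow_const ℓ).indicator measurableSet_Iio

theorem truncNegLogPow_nonneg (hy1 : y ≤ 1) {w : ℝ} (hw : 0 ≤ w) : 0 ≤ truncNegLogPow ℓ y w :=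
  indicator_nonneg (fun _ hwy => pow_nonneg (neg_nonneg.mpr
    (log_nonpos hw (le_of_lt (lt_of_lt_of_le hwy hy1)))) ℓ) w

theorem lt_truncNegLogPow_iff (hℓ : ℓ ≠ 0) (hy1 : y ≤ 1) {t w : ℝ} (ht : 0 < t) (hw : 0 ≤ w) :
    t < truncNegLogPow ℓ y w ↔ w ∈ Ioo 0 (min y (exp (-t ^ (ℓ : ℝ)⁻¹))) := by
  simp only [truncNegLogPow, indicator, mem_Iio, mem_Ioo, lt_min_iff]
  split_ifs with hwy
  · have hlog0 : 0 ≤ -log w := neg_nonneg.mpr (log_nonpos hw (hwy.trans_le hy1).le)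
    rw [← rpow_natCast, ← rpow_inv_lt_iff_of_pos ht.le hlog0 (by positivity)]
    rcases hw.eq_or_lt with rfl | hw0
    -- `log 0 = 0`, so `0` lies in no superlevel set
    · simp [(rpow_pos_of_pos ht _).not_gt]
    · rw [lt_neg, log_lt_iff_lt_exp hw0]
      tauto
  · simp [ht.le.not_gt, hwy]

theorem rpowMeasure_setOf_lt_truncNegLogPow (hℓ : ℓ ≠ 0) (hδ : 0 < δ) (hy : 0 ≤ y) (hy1 : y ≤ 1)
    {t : ℝ} (ht : 0 < t) :
    rpowMeasure δ {z | t < truncNegLogPow ℓ y z} =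
      ENNReal.ofReal (min y (exp (-t ^ (ℓ : ℝ)⁻¹)) ^ δ) := by
  have hlevel : {z | t < truncNegLogPow ℓ y z} ∩ Ioi 0 =
      Ioo 0 (min y (exp (-t ^ (ℓ : ℝ)⁻¹))) ∩ Ioi 0 := by
    ext z
    simp only [mem_inter_iff, mem_Ioi]
    exact and_congr_left fun hz => lt_truncNegLogPow_iff hℓ hy1 ht hz.le
  rw [rpowMeasure_apply, hlevel, ← rpowMeasure_apply,
    rpowMeasure_Ioo_zero hδ (le_min hy (exp_pos _).le)]

theorem lintegral_truncNegLogPow_rpowMeasure (hδ : 0 < δ) (hy : 0 ≤ y) (hy1 : y ≤ 1) :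
    ∫⁻ z, ENNReal.ofReal (truncNegLogPow ℓ y z) ∂rpowMeasure δ = ENNReal.ofReal (J ℓ δ y) := by
  have hdensity : ∀ z ∈ Ioi (0 : ℝ),
      ENNReal.ofReal (δ * z ^ (δ - 1)) * ENNReal.ofReal (truncNegLogPow ℓ y z) =
        (Iio y).indicator (fun z => ENNReal.ofReal (δ * z ^ (δ - 1) * (-log z) ^ ℓ)) z := by
    intro z hz
    rw [← ENNReal.ofReal_mul (mul_nonneg hδ.le (rpow_nonneg (le_of_lt hz) _)), truncNegLogPow]
    by_cases hzy : z ∈ Iio y <;> simp [hzy]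
  have hint : IntegrableOn (fun z => δ * z ^ (δ - 1) * (-log z) ^ ℓ) (Ioo 0 y) := by
    simpa only [mul_assoc, IntegrableOn] using
      ((integrableOn_rpow_mul_neg_log_pow hδ ℓ).mono_set (Ioo_subset_Ioo_right hy1)).const_mul δ
  rw [rpowMeasure, lintegral_withDensity_eq_lintegral_mul _ (by fun_prop) (by fun_prop)]
  simp only [Pi.mul_apply]
  rw [setLIntegral_congr_fun measurableSet_Ioi hdensity, lintegral_indicator measurableSet_Iio,
    Measure.restrict_restrict measurableSet_Iio, Iio_inter_Ioi,
    ← ofReal_integral_eq_lintegral_ofReal hint, J_eq_setIntegral hy]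
  exact ae_restrict_of_forall_mem measurableSet_Ioo fun z hz =>
    mul_rpow_mul_neg_log_pow_nonneg hδ.le ⟨hz.1, (hz.2.trans_le hy1).le⟩

theorem lintegral_truncNegLogPow_comp_le {α : Type*} [MeasurableSpace α] {μ : Measure α}
    {w : α → ℝ} (hw : Measurable w) (hw0 : ∀ a, 0 ≤ w a) {C : ℝ} (hC : 0 ≤ C)
    (hμ : ∀ s > 0, μ {a | w a < s} ≤ ENNReal.ofReal (C * s ^ δ))
    (hℓ : ℓ ≠ 0) (hδ : 0 < δ) (hy : 0 < y) (hy1 : y ≤ 1) :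
    ∫⁻ a, ENNReal.ofReal (truncNegLogPow ℓ y (w a)) ∂μ ≤
      ENNReal.ofReal C * ∫⁻ z, ENNReal.ofReal (truncNegLogPow ℓ y z) ∂rpowMeasure δ := by
  rw [← smul_eq_mul, ← lintegral_smul_measure]
  refine lintegral_ofReal_le_of_meas_lt_le
    (ae_of_all _ fun a => truncNegLogPow_nonneg hy1 (hw0 a)) (by fun_prop)
    (Measure.ae_smul_measure
      ((ae_pos_rpowMeasure δ).mono fun z hz => truncNegLogPow_nonneg hy1 hz.le) _)
    (by fun_prop) fun t ht => ?_
  set m := min y (exp (-t ^ (ℓ : ℝ)⁻¹))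
  calc μ {a | t < truncNegLogPow ℓ y (w a)} ≤ μ {a | w a < m} :=
        measure_mono fun a ha => ((lt_truncNegLogPow_iff hℓ hy1 ht (hw0 a)).mp ha).2
    _ ≤ ENNReal.ofReal (C * m ^ δ) := hμ m (lt_min hy (exp_pos _))
    _ = (ENNReal.ofReal C • rpowMeasure δ) {z | t < truncNegLogPow ℓ y z} := by
        rw [Measure.smul_apply, rpowMeasure_setOf_lt_truncNegLogPow hℓ hδ hy.le hy1 ht,
          smul_eq_mul, ← ENNReal.ofReal_mul hC]

end TruncNegLogPow

theorem mu1_mono {A B : Set ℂ} (h : A ⊆ B) : mu1 A ≤ mu1 B :=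
  measure_mono fun _ hθ => ⟨hθ.1, h hθ.2⟩

theorem mu1_S1 (P : ℂ[X]) (s : ℝ) :
    mu1 (S1 P s) =
      volume.restrict (Ioc 0 (2 * π)) {θ : ℝ | ‖P.eval (Complex.exp (θ * Complex.I))‖ < s} := by
  rw [Measure.restrict_apply' measurableSet_Ioc, mu1]
  congr 1 with θ
  simp [S1, Complex.norm_exp_ofReal_mul_I, and_comm]

theorem neg_one_pow_mul_circleIntOn_S1 (P : ℂ[X]) (ℓ : ℕ) (y : ℝ) :
    (-1) ^ ℓ * circleIntOn (S1 P y) (fun z => log ‖P.eval z‖ ^ ℓ) =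
      ∫ θ in (0 : ℝ)..2 * π, truncNegLogPow ℓ y ‖P.eval (Complex.exp (θ * Complex.I))‖ := by
  rw [circleIntOn, ← intervalIntegral.integral_const_mul]
  congr 1 with θ
  by_cases hθ : ‖P.eval (Complex.exp (θ * Complex.I))‖ < y <;>
    simp [S1, truncNegLogPow, Complex.norm_exp_ofReal_mul_I, hθ, ← neg_pow]

theorem support_mul_C_of_ne_zero {K : Type*} [Field K] {p : K[X]} {a : K} (ha : a ≠ 0) :
    (p * C a).support = p.support := by
  ext i
  simp [coeff_mul_C, ha]

theorem S1_subset_S1_mul_C_leadingCoeff_inv {P : ℂ[X]} (hP : 1 ≤ ‖P.leadingCoeff‖) (t : ℝ) :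
    S1 P t ⊆ S1 (P * C P.leadingCoeff⁻¹) t := by
  rintro z ⟨hz, hPz⟩
  refine ⟨hz, lt_of_le_of_lt ?_ hPz⟩
  rw [eval_mul, eval_C, norm_mul, norm_inv]
  exact mul_le_of_le_one_right (norm_nonneg _) (inv_le_one_of_one_le₀ hP)

theorem signed_log_power_integral_bound (k : ℕ) (hk : 2 ≤ k) (C : ℝ) (hC : 0 < C)
    (hLawton : ∀ Q : Polynomial ℂ, Q.Monic → Q.support.card = k → ∀ t : ℝ, 0 < t →
      mu1 (S1 Q t) ≤ ENNReal.ofReal (C * t ^ ((1:ℝ)/((k:ℝ)-1))))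
    (P : Polynomial ℂ) (hsupp : P.support.card = k)
    (hcoeff : ∀ i ∈ P.support, 1 ≤ ‖P.coeff i‖)
    (ℓ : ℕ) (hℓ : 1 ≤ ℓ) (y : ℝ) (hy : 0 < y) (hy1 : y ≤ 1) :
    0 ≤ (-1:ℝ)^ℓ *
        circleIntOn (S1 P y) (fun z => (Real.log ‖P.eval z‖)^ℓ) ∧
      (-1:ℝ)^ℓ *
        circleIntOn (S1 P y) (fun z => (Real.log ‖P.eval z‖)^ℓ)
        ≤ C * Ifun ℓ k y := by
  set δ : ℝ := 1 / ((k : ℝ) - 1)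
  have hδ : 0 < δ := one_div_pos.mpr (by linarith [show (2 : ℝ) ≤ k by exact_mod_cast hk])
  have hP : P ≠ 0 := by
    rintro rfl
    simp only [support_zero, Finset.card_empty] at hsupp
    omega
  set w : ℝ → ℝ := fun θ => ‖P.eval (Complex.exp (θ * Complex.I))‖
  have hdist : ∀ s > 0, volume.restrict (Ioc 0 (2 * π)) {θ | w θ < s} ≤
      ENNReal.ofReal (C * s ^ δ) := fun s hs => by
    rw [← mu1_S1]
    refine (mu1_mono (S1_subset_S1_mul_C_leadingCoeff_inv
      (hcoeff _ (natDegree_mem_support_of_nonzero hP)) s)).trans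
      (hLawton _ (monic_mul_leadingCoeff_inv hP) ?_ s hs)
    rw [support_mul_C_of_ne_zero (inv_ne_zero (leadingCoeff_ne_zero.mpr hP)), hsupp]
  have hw : Measurable w := by fun_prop
  have hG : ∀ θ, 0 ≤ truncNegLogPow ℓ y (w θ) := fun _ => truncNegLogPow_nonneg hy1 (norm_nonneg _)
  rw [neg_one_pow_mul_circleIntOn_S1]
  refine ⟨intervalIntegral.integral_nonneg two_pi_pos.le fun θ _ => hG θ, ?_⟩
  rw [intervalIntegral.integral_of_le two_pi_pos.le,
    integral_eq_lintegral_of_nonneg_ae (ae_of_all _ hG)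
      (measurable_truncNegLogPow.comp hw).aestronglyMeasurable]
  refine ENNReal.toReal_le_of_le_ofReal (mul_nonneg hC.le (J_nonneg hδ.le hy.le hy1)) ?_
  calc _ ≤ ENNReal.ofReal C * ∫⁻ z, ENNReal.ofReal (truncNegLogPow ℓ y z) ∂rpowMeasure δ :=
        lintegral_truncNegLogPow_comp_le hw (fun _ => norm_nonneg _) hC.le hdist
          (by omega) hδ hy hy1
    _ = ENNReal.ofReal (C * Ifun ℓ k y) := by
        rw [lintegral_truncNegLogPow_rpowMeasure hδ hy.le hy1, ← ENNReal.ofReal_mul hC.le, Ifun]
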